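/- Let Ψ be an M×N integer matrix with entries bounded in absolute value by P, and let C > 0. If Spark(Ψ) > K, then the matrix Φ = (1/C)Ψ satisfies λ_min(Φ_𝒦* Φ_𝒦) ≥ 1/(C²·(KMP²)^{K−1}) for every size-K index set 𝒦. -/

import Mathlib

/-!
Write `B` for the real cast of the integer columns `Ψ_𝒦`, so that `Φ_𝒦 = C⁻¹ • B`. Since
`Spark(Ψ) > K`, `B` is injective, hence `Bᵀ B` is positive definite; its determinant is a positive
integer, so `det (Φ_𝒦ᵀ Φ_𝒦) ≥ C^(-2K)`. Every eigenvalue of the positive definite Gram matrix is at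
most its trace `≤ K M P² / C²`, so dividing the determinant by the other `K - 1` eigenvalues gives
`λ_min ≥ C^(-2K) / (K M P² / C²)^(K-1)`.
-/

open Matrix Finset

namespace Matrix

section Spectral

variable {n : Type*} [Fintype n] [DecidableEq n] {H : Matrix n n ℝ}

theorem PosSemidef.eigenvalues_le_trace (hH : H.PosSemidef) (i : n) :
    hH.1.eigenvalues i ≤ H.trace := by
  rw [hH.1.trace_eq_sum_eigenvalues]
  exact single_le_sum (fun j _ => by simpa using hH.eigenvalues_nonneg j) (mem_univ i)

theorem PosDef.det_le_eigenvalues_mul_trace_pow (hH : H.PosDef) (i : n) :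
    H.det ≤ hH.1.eigenvalues i * H.trace ^ (Fintype.card n - 1) := by
  have hpos := hH.eigenvalues_pos
  rw [hH.1.det_eq_prod_eigenvalues, ← mul_prod_erase univ _ (mem_univ i)]
  simp only [RCLike.ofReal_real_eq_id, id_eq]
  gcongr
  · exact (hpos i).le
  · calc ∏ j ∈ univ.erase i, hH.1.eigenvalues j ≤ ∏ _j ∈ univ.erase i, H.trace :=
          prod_le_prod (fun j _ => (hpos j).le) fun j _ => hH.posSemidef.eigenvalues_le_trace j
      _ = H.trace ^ (Fintype.card n - 1) := by
          rw [prod_const, card_erase_of_mem (mem_univ i), card_univ]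

theorem PosDef.div_le_eigenvalues (hH : H.PosDef) {d T : ℝ} (hd : d ≤ H.det) (hT : H.trace ≤ T)
    (i : n) : d / T ^ (Fintype.card n - 1) ≤ hH.1.eigenvalues i := by
  have htrace_pos : 0 < H.trace := (hH.eigenvalues_pos i).trans_le
    (hH.posSemidef.eigenvalues_le_trace i)
  calc d / T ^ (Fintype.card n - 1) ≤ H.det / H.trace ^ (Fintype.card n - 1) :=
        div_le_div₀ hH.det_pos.le hd (by positivity) (pow_le_pow_left₀ htrace_pos.le hT _)
    _ ≤ hH.1.eigenvalues i := by
        rw [div_le_iff₀ (by positivity)]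
        exact hH.det_le_eigenvalues_mul_trace_pow i

end Spectral

theorem conjTranspose_smul_mul_smul_self {m n : Type*} [Fintype m] (c : ℝ) (A : Matrix m n ℝ) :
    (c • A)ᴴ * (c • A) = c ^ 2 • (Aᴴ * A) := by
  rw [conjTranspose_smul, star_trivial, smul_mul, Matrix.mul_smul, smul_smul, sq]

section Gram

variable {m n : Type*} [Fintype m] [Fintype n]

theorem trace_conjTranspose_mul_self_le {A : Matrix m n ℝ} {b : ℝ} (hA : ∀ i j, |A i j| ≤ b) :
    (Aᴴ * A).trace ≤ Fintype.card m * Fintype.card n * b ^ 2 := by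
  rw [← star_vec_dotProduct_vec]
  calc star (vec A) ⬝ᵥ vec A = ∑ j, ∑ i, A i j ^ 2 := by
        simp [vec, dotProduct, Fintype.sum_prod_type, sq]
    _ ≤ ∑ _j : n, ∑ _i : m, b ^ 2 := sum_le_sum fun j _ => sum_le_sum fun i _ =>
        sq_le_sq' (abs_le.mp (hA i j)).1 (abs_le.mp (hA i j)).2
    _ = _ := by
        simp only [sum_const, card_univ, nsmul_eq_mul]
        ring

theorem one_le_det_conjTranspose_mul_self_of_int [DecidableEq n] {B : Matrix m n ℤ}
    (hB : Function.Injective (B.map (Int.cast : ℤ → ℝ)).mulVec) :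
    1 ≤ ((B.map (Int.cast : ℤ → ℝ))ᴴ * B.map (Int.cast : ℤ → ℝ) : Matrix n n ℝ).det := by
  have hcast : ((Bᵀ * B).det : ℝ) =
      ((B.map (Int.cast : ℤ → ℝ))ᴴ * B.map (Int.cast : ℤ → ℝ) : Matrix n n ℝ).det := by
    rw [Int.cast_det, ← Int.coe_castRingHom, Matrix.map_mul, transpose_map, Int.coe_castRingHom,
      ← conjTranspose_eq_transpose_of_trivial]
  have hpos := (PosDef.conjTranspose_mul_self _ hB).det_pos
  rw [← hcast, Int.cast_pos] at hpos
  rw [← hcast]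
  exact_mod_cast hpos

end Gram

theorem injective_mulVec_submatrix_of_spark {m n R : Type*} [Fintype n] [Ring R]
    [DecidableEq R] {A : Matrix m n R} {K : ℕ}
    (hspark : ∀ x : n → R, x ≠ 0 → A *ᵥ x = 0 → K < #{i | x i ≠ 0})
    (s : Finset n) (hs : #s ≤ K) :
    Function.Injective (A.submatrix id ((↑) : s → n)).mulVec := by
  classical
  suffices h : ∀ x, (A.submatrix id ((↑) : s → n)) *ᵥ x = 0 → x = 0 from
    fun x y hxy => sub_eq_zero.mp (h _ (by rw [mulVec_sub, hxy, sub_self]))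
  intro x hx
  by_contra hne
  set y : n → R := fun j => if h : j ∈ s then x ⟨j, h⟩ else 0
  have hy : y ≠ 0 := by
    obtain ⟨j, hj⟩ := Function.ne_iff.mp hne
    exact fun h0 => hj (by simpa [y] using congrFun h0 j)
  have hAy : A *ᵥ y = 0 := by
    ext i
    rw [← congrFun hx i]
    calc ∑ j, A i j * y j = ∑ j ∈ s, A i j * y j :=
          (sum_subset (subset_univ s) fun j _ hj => by simp [y, hj]).symm
      _ = ∑ j : s, A i j * x j := by
          rw [← sum_coe_sort]
          exact sum_congr rfl fun j _ => by simp [y]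
  have hsupp : ({j | y j ≠ 0} : Finset n) ⊆ s := fun j hj => by
    by_contra h
    simp [y, h] at hj
  exact absurd ((hspark y hy hAy).trans_le ((card_le_card hsupp).trans hs)) (lt_irrefl _)

end Matrix

/-- If `Spark(Ψ) > K` (every nonzero nullspace vector of `Ψ` has more than `K` nonzero
entries), `Ψ` is an integer matrix with entries bounded by `P`, and `Φ = (1/C)Ψ` for `C > 0`,
then for every size-`K` index set `𝒦`, every eigenvalue (in particular the smallest) of
`Φ_𝒦* Φ_𝒦` is at least `1/(C²·(K·M·P²)^(K-1))`. -/
theorem stmt_7 {M N : ℕ} (K : ℕ) (Ψ : Matrix (Fin M) (Fin N) ℤ) (P : ℤ)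
    (hP : ∀ i j, |Ψ i j| ≤ P) (C : ℝ) (hC : 0 < C)
    (hspark : ∀ x : Fin N → ℝ, x ≠ 0 → (Ψ.map (Int.cast : ℤ → ℝ)).mulVec x = 0 →
      K < (Finset.univ.filter fun i => x i ≠ 0).card) :
    ∀ 𝒦 : Finset (Fin N), 𝒦.card = K →
      ∀ i : 𝒦,
        1 / (C ^ 2 * ((K : ℝ) * M * (P : ℝ) ^ 2) ^ (K - 1)) ≤
          (Matrix.isHermitian_conjTranspose_mul_self
            (fun i : Fin M => fun j : 𝒦 => (Ψ i j : ℝ) / C)).eigenvalues i := by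
  intro 𝒦 h𝒦 i
  set B : Matrix (Fin M) 𝒦 ℝ := (Ψ.submatrix id (↑)).map Int.cast
  have hinj := injective_mulVec_submatrix_of_spark hspark 𝒦 h𝒦.le
  have hcard : Fintype.card 𝒦 = K := by simp [h𝒦]
  have hΦ : (fun i : Fin M => fun j : 𝒦 => (Ψ i j : ℝ) / C) = C⁻¹ • B := by
    ext; simp [B, div_eq_inv_mul]
  have hPD : ((C⁻¹ • B)ᴴ * (C⁻¹ • B)).PosDef := by
    rw [conjTranspose_smul_mul_smul_self]
    exact (PosDef.conjTranspose_mul_self B hinj).smul (by positivity)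
  have hdet : (C⁻¹ ^ 2) ^ K ≤ ((C⁻¹ • B)ᴴ * (C⁻¹ • B)).det := by
    rw [conjTranspose_smul_mul_smul_self, det_smul, hcard]
    exact le_mul_of_one_le_right (by positivity) (one_le_det_conjTranspose_mul_self_of_int hinj)
  have htrace : ((C⁻¹ • B)ᴴ * (C⁻¹ • B)).trace ≤ K * M * P ^ 2 / C ^ 2 := by
    have hentry : ∀ a j, |(C⁻¹ • B) a j| ≤ P / C := fun a j => by
      rw [← hΦ, abs_div, abs_of_pos hC]
      gcongr
      exact_mod_cast hP a j
    refine (trace_conjTranspose_mul_self_le hentry).trans_eq ?_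
    simp only [Fintype.card_fin, hcard]
    ring
  rw [hΦ]
  refine le_of_eq_of_le ?_ (hPD.div_le_eigenvalues hdet htrace i)
  obtain ⟨k, rfl⟩ := Nat.exists_eq_add_of_le' (h𝒦 ▸ card_pos.mpr ⟨i, i.2⟩ : 1 ≤ K)
  rw [hcard, Nat.add_sub_cancel, div_pow, inv_pow, inv_pow, pow_succ]
  field_simp
  ring
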